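/- Let Ω₁, Ω₂ be domains in ℂ, φ: Ω₁ → Ω₂ a biholomorphism with inverse Φ, and suppose Ω₁ is a quadrature domain of finite area so that its Bergman kernel satisfies 1 = Σ_{j,m} c_{jm} K₁^{(m)}(z, w_j) on Ω₁. Then Φ'(z) = Σ_{j,m} c_{jm} (∂^m/∂w̄^m)[K₂(z, φ(w)) conj(φ'(w))]|_{w=w_j} for all z ∈ Ω₂; in particular, Φ' is a finite linear combination of functions z ↦ (∂^m/∂W̄^m)K₂(z, W) at points W ∈ Ω₂. -/

import Mathlib

/-!
Biholomorphic domains have Bergman kernels related by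
`K₁(u, v) = φ'(u) K₂(φ u, φ v) conj φ'(v)`: the right-hand side lies in `A²(Ω₁)` and, after the
change of variables `ζ = φ u` with Jacobian `|φ'|²`, reproduces `A²(Ω₁)`, so it is `K₁` by
uniqueness of the reproducing kernel. Evaluating the quadrature identity at `Φ z` and multiplying
by `Φ'(z)` turns each `K₁^{(m)}(Φ z, w_j)` into the `m`-th `w̄`-derivative of
`K₂(z, φ w) conj φ'(w)` at `w_j`. By the chain and Leibniz rules, that derivative is a linear
combination, with coefficients independent of `z`, of the `∂^p/∂W̄^p K₂(z, W)` at `W = φ(w_j)`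
for `p ≤ m`.
-/

open MeasureTheory Complex

/-- Membership in the Bergman space `A²(Ω)` of square-integrable holomorphic
functions on `Ω`. -/
def InBergmanSpace (Ω : Set ℂ) (f : ℂ → ℂ) : Prop :=
  DifferentiableOn ℂ f Ω ∧ Integrable (fun z => ‖f z‖ ^ 2) (volume.restrict Ω)

/-- `K` is the Bergman kernel of `Ω`. -/
def IsBergmanKernel (Ω : Set ℂ) (K : ℂ → ℂ → ℂ) : Prop :=
  (∀ z ∈ Ω, InBergmanSpace Ω fun w => K w z) ∧
  (∀ f : ℂ → ℂ, InBergmanSpace Ω f → ∀ z ∈ Ω,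
    f z = ∫ w in Ω, f w * starRingEnd ℂ (K w z))

/-- The `m`-th antiholomorphic derivative `(∂^m/∂w̄^m) F(w)` of an antiholomorphic
function `F`, computed as the conjugate of the `m`-th derivative of its conjugate. -/
noncomputable def antibarDeriv (m : ℕ) (F : ℂ → ℂ) (w : ℂ) : ℂ :=
  starRingEnd ℂ (iteratedDeriv m (fun u => starRingEnd ℂ (F u)) w)

open Set Filter Topology ComplexConjugate

section ChangeOfVariables

variable {E : Type*} [NormedAddCommGroup E] [NormedSpace ℝ E]

lemma det_restrictScalars_toSpanSingleton (a : ℂ) :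
    ((ContinuousLinearMap.toSpanSingleton ℂ a).restrictScalars ℝ).det = normSq a := by
  simp [ContinuousLinearMap.det, LinearMap.det_restrictScalars, Algebra.norm_complex_apply]

variable {s : Set ℂ} {φ φ' : ℂ → ℂ}

theorem setIntegral_image_eq_setIntegral_normSq_smul (hs : MeasurableSet s)
    (hφ : ∀ u ∈ s, HasDerivWithinAt φ (φ' u) s u) (hinj : InjOn φ s) (g : ℂ → E) :
    ∫ ζ in φ '' s, g ζ = ∫ u in s, normSq (φ' u) • g (φ u) := by
  rw [integral_image_eq_integral_abs_det_fderiv_smul volume hs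
    (fun u hu => (hφ u hu).hasFDerivWithinAt.restrictScalars ℝ) hinj g]
  simp_rw [det_restrictScalars_toSpanSingleton, abs_of_nonneg (normSq_nonneg _)]

theorem integrableOn_image_iff_integrableOn_normSq_smul (hs : MeasurableSet s)
    (hφ : ∀ u ∈ s, HasDerivWithinAt φ (φ' u) s u) (hinj : InjOn φ s) (g : ℂ → E) :
    IntegrableOn g (φ '' s) ↔ IntegrableOn (fun u => normSq (φ' u) • g (φ u)) s := by
  rw [integrableOn_image_iff_integrableOn_abs_det_fderiv_smul volume hs
    (fun u hu => (hφ u hu).hasFDerivWithinAt.restrictScalars ℝ) hinj g]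
  simp_rw [det_restrictScalars_toSpanSingleton, abs_of_nonneg (normSq_nonneg _)]

end ChangeOfVariables

namespace InBergmanSpace

variable {Ω s t : Set ℂ} {f g : ℂ → ℂ}

lemma memLp_two (hΩ : MeasurableSet Ω) (hf : InBergmanSpace Ω f) :
    MemLp f 2 (volume.restrict Ω) :=
  (memLp_two_iff_integrable_sq_norm (hf.1.continuousOn.aestronglyMeasurable hΩ)).mpr hf.2

lemma sub (hΩ : MeasurableSet Ω) (hf : InBergmanSpace Ω f) (hg : InBergmanSpace Ω g) :
    InBergmanSpace Ω (f - g) :=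
  ⟨hf.1.sub hg.1, (memLp_two_iff_integrable_sq_norm
    ((hf.1.sub hg.1).continuousOn.aestronglyMeasurable hΩ)).mp
      ((hf.memLp_two hΩ).sub (hg.memLp_two hΩ))⟩

lemma mul_const (hf : InBergmanSpace Ω f) (c : ℂ) : InBergmanSpace Ω (fun z => f z * c) :=
  ⟨hf.1.mul_const c, by simpa only [norm_mul, mul_pow] using hf.2.mul_const (‖c‖ ^ 2)⟩

lemma integrable_mul_conj (hΩ : MeasurableSet Ω) (hf : InBergmanSpace Ω f)
    (hg : InBergmanSpace Ω g) :
    Integrable (fun z => f z * conj (g z)) (volume.restrict Ω) :=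
  (hf.memLp_two hΩ).integrable_mul (hg.memLp_two hΩ).star

lemma eqOn_zero_of_integral_mul_conj_self_eq_zero (hΩ : IsOpen Ω) (hf : InBergmanSpace Ω f)
    (h : ∫ z in Ω, f z * conj (f z) = 0) : EqOn f 0 Ω := by
  have hnorm : ∫ z in Ω, ‖f z‖ ^ 2 = 0 := by
    have hre := integral_re (hf.integrable_mul_conj hΩ.measurableSet hf)
    simp_rw [h, RCLike.re_to_complex, mul_conj'] at hre
    exact_mod_cast hre
  have hae : f =ᵐ[volume.restrict Ω] 0 := by
    filter_upwards [(integral_eq_zero_iff_of_nonneg (fun z => sq_nonneg ‖f z‖) hf.2).mp hnorm]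
      with z hz
    simpa using hz
  exact Measure.eqOn_open_of_ae_eq hae hΩ hf.1.continuousOn continuousOn_const

lemma comp_mul_deriv (hs : IsOpen s) {φ : ℂ → ℂ} (hφ : DifferentiableOn ℂ φ s)
    (hinj : InjOn φ s) (hst : MapsTo φ s t) (hf : InBergmanSpace t f) :
    InBergmanSpace s (fun u => f (φ u) * deriv φ u) := by
  refine ⟨(hf.1.comp hφ hst).mul (hφ.deriv hs), ?_⟩
  have h := (integrableOn_image_iff_integrableOn_normSq_smul hs.measurableSet
    (fun u hu => (hφ.differentiableAt (hs.mem_nhds hu)).hasDerivAt.hasDerivWithinAt) hinj _).mp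
    (IntegrableOn.mono_set hf.2 (image_subset_iff.mpr hst))
  refine h.congr_fun (fun u _ => ?_) hs.measurableSet
  simp only [normSq_eq_norm_sq, norm_mul, mul_pow, smul_eq_mul, mul_comm]

end InBergmanSpace

lemma setIntegral_image_mul_conj {s : Set ℂ} (hs : IsOpen s) {φ : ℂ → ℂ}
    (hφ : DifferentiableOn ℂ φ s) (hinj : InjOn φ s) (f g : ℂ → ℂ) :
    ∫ ζ in φ '' s, f ζ * conj (g ζ) =
      ∫ u in s, f (φ u) * deriv φ u * conj (g (φ u) * deriv φ u) := by
  rw [setIntegral_image_eq_setIntegral_normSq_smul hs.measurableSet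
    (fun u hu => (hφ.differentiableAt (hs.mem_nhds hu)).hasDerivAt.hasDerivWithinAt) hinj]
  congr 1 with u
  rw [real_smul, ← mul_conj, map_mul]
  ring

lemma Set.LeftInvOn.deriv_mul_deriv_eq_one {𝕜 : Type*} [NontriviallyNormedField 𝕜]
    {s t : Set 𝕜} {φ Φ : 𝕜 → 𝕜} (hinv : LeftInvOn Φ φ s) (hs : IsOpen s) (ht : IsOpen t)
    (hφ : DifferentiableOn 𝕜 φ s) (hΦ : DifferentiableOn 𝕜 Φ t) (hst : MapsTo φ s t) {u : 𝕜}
    (hu : u ∈ s) : deriv Φ (φ u) * deriv φ u = 1 := by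
  have hid : Φ ∘ φ =ᶠ[𝓝 u] id := eventually_of_mem (hs.mem_nhds hu) fun x hx => hinv hx
  rw [← deriv_comp u (hΦ.differentiableAt (ht.mem_nhds (hst hu)))
    (hφ.differentiableAt (hs.mem_nhds hu)), hid.deriv_eq, deriv_id]

namespace IsBergmanKernel

variable {Ω : Set ℂ} {K : ℂ → ℂ → ℂ}

lemma conj_apply (hK : IsBergmanKernel Ω K) {z ζ : ℂ} (hz : z ∈ Ω) (hζ : ζ ∈ Ω) :
    conj (K z ζ) = K ζ z := by
  have h₁ : K z ζ = ∫ w in Ω, K w ζ * conj (K w z) := hK.2 _ (hK.1 ζ hζ) z hz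
  have h₂ : K ζ z = ∫ w in Ω, K w z * conj (K w ζ) := hK.2 _ (hK.1 z hz) ζ hζ
  rw [h₁, h₂, ← integral_conj]
  simp_rw [map_mul, conj_conj, mul_comm]

theorem eqOn_of_integral_mul_conj_eq (hΩ : IsOpen Ω) (hK : IsBergmanKernel Ω K) {z : ℂ}
    (hz : z ∈ Ω) {L : ℂ → ℂ} (hL : InBergmanSpace Ω L)
    (hrep : ∀ f, InBergmanSpace Ω f → ∫ ζ in Ω, f ζ * conj (L ζ) = f z) :
    EqOn L (fun ζ => K ζ z) Ω := by
  set h := L - fun ζ => K ζ z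
  have hKz := hK.1 z hz
  have hh : InBergmanSpace Ω h := hL.sub hΩ.measurableSet hKz
  have hnorm : ∫ ζ in Ω, h ζ * conj (h ζ) = 0 := by
    simp_rw [show ∀ ζ, conj (h ζ) = conj (L ζ) - conj (K ζ z) from fun ζ => map_sub _ _ _,
      mul_sub]
    rw [integral_sub (hh.integrable_mul_conj hΩ.measurableSet hL)
      (hh.integrable_mul_conj hΩ.measurableSet hKz), hrep h hh, ← hK.2 h hh z hz, sub_self]
  exact fun ζ hζ => sub_eq_zero.mp (hh.eqOn_zero_of_integral_mul_conj_self_eq_zero hΩ hnorm hζ)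

end IsBergmanKernel

section TransformationLaw

variable {s t : Set ℂ} {φ Φ : ℂ → ℂ} {K₁ K₂ : ℂ → ℂ → ℂ}

theorem IsBergmanKernel.apply_eq_deriv_mul_apply_comp_mul_conj_deriv (hs : IsOpen s)
    (ht : IsOpen t) (hφ : DifferentiableOn ℂ φ s) (hΦ : DifferentiableOn ℂ Φ t)
    (hφst : MapsTo φ s t) (hΦts : MapsTo Φ t s) (hinv : InvOn Φ φ s t)
    (hK₁ : IsBergmanKernel s K₁) (hK₂ : IsBergmanKernel t K₂) {u v : ℂ} (hu : u ∈ s)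
    (hv : v ∈ s) :
    K₁ u v = deriv φ u * K₂ (φ u) (φ v) * conj (deriv φ v) := by
  set G : ℂ → ℂ := fun ζ => K₂ ζ (φ v) * conj (deriv φ v)
  have hrep : ∀ f, InBergmanSpace s f → ∫ x in s, f x * conj (G (φ x) * deriv φ x) = f v := by
    intro f hf
    set g : ℂ → ℂ := fun ζ => f (Φ ζ) * deriv Φ ζ
    have hg : InBergmanSpace t g := hf.comp_mul_deriv ht hΦ hinv.2.injOn hΦts
    have hfg : EqOn f (fun x => g (φ x) * deriv φ x) s := fun x hx => by
      simp only [g, hinv.1 hx, mul_assoc,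
        hinv.1.deriv_mul_deriv_eq_one hs ht hφ hΦ hφst hx, mul_one]
    calc ∫ x in s, f x * conj (G (φ x) * deriv φ x)
        = ∫ x in s, g (φ x) * deriv φ x * conj (G (φ x) * deriv φ x) :=
          setIntegral_congr_fun hs.measurableSet fun x hx => by rw [hfg hx]
      _ = ∫ ζ in t, g ζ * conj (G ζ) := by
          rw [← setIntegral_image_mul_conj hs hφ hinv.1.injOn,
            (hinv.bijOn hφst hΦts).image_eq]
      _ = (∫ ζ in t, g ζ * conj (K₂ ζ (φ v))) * deriv φ v := by
          simp only [G, map_mul, conj_conj, ← mul_assoc, integral_mul_const]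
      _ = f v := by rw [← hK₂.2 g hg _ (hφst hv), hfg hv]
  have hL : InBergmanSpace s fun x => G (φ x) * deriv φ x :=
    ((hK₂.1 _ (hφst hv)).mul_const _).comp_mul_deriv hs hφ hinv.1.injOn hφst
  calc K₁ u v = G (φ u) * deriv φ u := (hK₁.eqOn_of_integral_mul_conj_eq hs hv hL hrep hu).symm
    _ = deriv φ u * K₂ (φ u) (φ v) * conj (deriv φ v) := by ring

theorem IsBergmanKernel.deriv_mul_apply_eq (hs : IsOpen s)
    (ht : IsOpen t) (hφ : DifferentiableOn ℂ φ s) (hΦ : DifferentiableOn ℂ Φ t)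
    (hφst : MapsTo φ s t) (hΦts : MapsTo Φ t s) (hinv : InvOn Φ φ s t)
    (hK₁ : IsBergmanKernel s K₁) (hK₂ : IsBergmanKernel t K₂) {z u : ℂ} (hz : z ∈ t)
    (hu : u ∈ s) :
    deriv Φ z * K₁ (Φ z) u = K₂ z (φ u) * conj (deriv φ u) := by
  rw [hK₁.apply_eq_deriv_mul_apply_comp_mul_conj_deriv hs ht hφ hΦ hφst hΦts hinv hK₂
    (hΦts hz) hu, hinv.2 hz]
  linear_combination K₂ z (φ u) * conj (deriv φ u) *
    hinv.2.deriv_mul_deriv_eq_one ht hs hΦ hφ hΦts hz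

end TransformationLaw

section Jets

def jetFunctionals (t : Set ℂ) (ζ : ℂ) (m : ℕ) : Submodule ℂ ((ℂ → ℂ) → ℂ) where
  carrier := {T | ∃ a : ℕ → ℂ, ∀ F, DifferentiableOn ℂ F t →
    T F = ∑ p ∈ Finset.range (m + 1), a p * iteratedDeriv p F ζ}
  add_mem' := by
    rintro T₁ T₂ ⟨a₁, h₁⟩ ⟨a₂, h₂⟩
    exact ⟨a₁ + a₂, fun F hF => by simp [h₁ F hF, h₂ F hF, add_mul, Finset.sum_add_distrib]⟩
  zero_mem' := ⟨0, fun F _ => by simp⟩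
  smul_mem' := by
    rintro c T ⟨a, h⟩
    exact ⟨c • a, fun F hF => by simp [h F hF, Finset.mul_sum, mul_assoc]⟩

variable {t : Set ℂ} {ζ : ℂ} {m n : ℕ} {T T' : (ℂ → ℂ) → ℂ}

lemma mem_jetFunctionals_of_eq (hT : T ∈ jetFunctionals t ζ m)
    (h : ∀ F, DifferentiableOn ℂ F t → T' F = T F) : T' ∈ jetFunctionals t ζ m := by
  obtain ⟨a, ha⟩ := hT
  exact ⟨a, fun F hF => (h F hF).trans (ha F hF)⟩

lemma jetFunctionals_mono (hmn : m ≤ n) : jetFunctionals t ζ m ≤ jetFunctionals t ζ n := by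
  rintro T ⟨a, ha⟩
  refine ⟨fun p => if p ≤ m then a p else 0, fun F hF => ?_⟩
  have hrange : (Finset.range (n + 1)).filter (· ≤ m) = Finset.range (m + 1) := by
    ext p
    simp only [Finset.mem_filter, Finset.mem_range]
    omega
  simp only [ite_mul, zero_mul, ← Finset.sum_filter, hrange, ha F hF]

lemma comp_deriv_mem_jetFunctionals (ht : IsOpen t) (hT : T ∈ jetFunctionals t ζ m) :
    (fun F => T (deriv F)) ∈ jetFunctionals t ζ (m + 1) := by
  obtain ⟨a, ha⟩ := hT
  refine ⟨fun p => if p = 0 then 0 else a (p - 1), fun F hF => ?_⟩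
  show T (deriv F) = _
  rw [ha _ (hF.deriv ht), Finset.sum_range_succ' _ (m + 1)]
  simp [iteratedDeriv_succ']

theorem iteratedDeriv_comp_mul_mem_jetFunctionals {s : Set ℂ} (hs : IsOpen s) (ht : IsOpen t)
    {φ : ℂ → ℂ} (hφ : DifferentiableOn ℂ φ s) (hst : MapsTo φ s t) {w₀ : ℂ} (hw₀ : w₀ ∈ s)
    (m : ℕ) : ∀ g, DifferentiableOn ℂ g s →
      (fun F => iteratedDeriv m (fun u => F (φ u) * g u) w₀) ∈ jetFunctionals t (φ w₀) m := by
  induction m with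
  | zero => exact fun g _ => ⟨fun _ => g w₀, fun F _ => by simp [mul_comm]⟩
  | succ m ih =>
    intro g hg
    refine mem_jetFunctionals_of_eq (add_mem
      (comp_deriv_mem_jetFunctionals ht (ih (fun u => deriv φ u * g u) ((hφ.deriv hs).mul hg)))
      (jetFunctionals_mono m.le_succ (ih _ (hg.deriv hs)))) fun F hF => ?_
    have hderiv : deriv (fun u => F (φ u) * g u) =ᶠ[𝓝 w₀]
        fun u => deriv F (φ u) * (deriv φ u * g u) + F (φ u) * deriv g u := by
      filter_upwards [hs.mem_nhds hw₀] with u hu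
      have hφu := (hφ.differentiableAt (hs.mem_nhds hu)).hasDerivAt
      have hFu := (hF.differentiableAt (ht.mem_nhds (hst hu))).hasDerivAt
      exact ((hFu.comp u hφu).mul (hg.differentiableAt (hs.mem_nhds hu)).hasDerivAt).deriv.trans
        (by rw [Function.comp_apply]; ring)
    have hcont : ∀ f : ℂ → ℂ, DifferentiableOn ℂ f s → ContDiffAt ℂ m f w₀ :=
      fun f hf => (hf.contDiffOn hs).contDiffAt (hs.mem_nhds hw₀)
    rw [Pi.add_apply, iteratedDeriv_succ', hderiv.iteratedDeriv_eq, iteratedDeriv_fun_add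
      (hcont (fun u => deriv F (φ u) * (deriv φ u * g u))
        (((hF.deriv ht).comp hφ hst).mul ((hφ.deriv hs).mul hg)))
      (hcont (fun u => F (φ u) * deriv g u) ((hF.comp hφ hst).mul (hg.deriv hs)))]

end Jets

section AntibarDeriv

variable {m : ℕ} {F G : ℂ → ℂ} {w : ℂ}

lemma antibarDeriv_eq_conj_iteratedDeriv (h : ∀ᶠ u in 𝓝 w, conj (F u) = G u) :
    antibarDeriv m F w = conj (iteratedDeriv m G w) :=
  congrArg conj (EventuallyEq.iteratedDeriv_eq m h)

lemma antibarDeriv_congr (h : F =ᶠ[𝓝 w] G) : antibarDeriv m F w = antibarDeriv m G w :=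
  antibarDeriv_eq_conj_iteratedDeriv (h.mono fun u hu => by rw [hu])

lemma antibarDeriv_const_mul (c : ℂ) (F : ℂ → ℂ) (w : ℂ) :
    antibarDeriv m (fun u => c * F u) w = c * antibarDeriv m F w := by
  simp [antibarDeriv]

end AntibarDeriv

section Quadrature

variable {s t : Set ℂ} {φ Φ : ℂ → ℂ} {K₁ K₂ : ℂ → ℂ → ℂ} {N : ℕ} {n : Fin N → ℕ}
  {w : Fin N → ℂ} {c : Fin N → ℕ → ℂ}

theorem deriv_eq_sum_antibarDeriv_of_quadrature (hs : IsOpen s)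
    (ht : IsOpen t) (hφ : DifferentiableOn ℂ φ s) (hΦ : DifferentiableOn ℂ Φ t)
    (hφst : MapsTo φ s t) (hΦts : MapsTo Φ t s) (hinv : InvOn Φ φ s t)
    (hK₁ : IsBergmanKernel s K₁) (hK₂ : IsBergmanKernel t K₂) (hw : ∀ j, w j ∈ s)
    (hquad : ∀ z ∈ s, (1 : ℂ) = ∑ j, ∑ m ∈ Finset.range (n j + 1),
      c j m * antibarDeriv m (fun u => K₁ z u) (w j)) {z : ℂ} (hz : z ∈ t) :
    deriv Φ z = ∑ j, ∑ m ∈ Finset.range (n j + 1),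
      c j m * antibarDeriv m (fun u => K₂ z (φ u) * conj (deriv φ u)) (w j) := by
  have hlaw : ∀ j m, deriv Φ z * antibarDeriv m (fun u => K₁ (Φ z) u) (w j) =
      antibarDeriv m (fun u => K₂ z (φ u) * conj (deriv φ u)) (w j) := fun j m => by
    rw [← antibarDeriv_const_mul]
    exact antibarDeriv_congr (eventually_of_mem (hs.mem_nhds (hw j)) fun u hu =>
      hK₁.deriv_mul_apply_eq hs ht hφ hΦ hφst hΦts hinv hK₂ hz hu)
  rw [← mul_one (deriv Φ z), hquad (Φ z) (hΦts hz)]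
  simp_rw [Finset.mul_sum, mul_left_comm (deriv Φ z), hlaw]

theorem IsBergmanKernel.exists_sum_antibarDeriv_pullback_eq (hs : IsOpen s) (ht : IsOpen t)
    (hφ : DifferentiableOn ℂ φ s) (hst : MapsTo φ s t) {K : ℂ → ℂ → ℂ}
    (hK : IsBergmanKernel t K) {w₀ : ℂ} (hw₀ : w₀ ∈ s) (n : ℕ) (c : ℕ → ℂ) :
    ∃ d : ℕ → ℂ, ∀ z ∈ t,
      ∑ m ∈ Finset.range (n + 1), c m * antibarDeriv m (fun u => K z (φ u) * conj (deriv φ u)) w₀ =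
        ∑ p ∈ Finset.range (n + 1), d p * antibarDeriv p (fun u => K z u) (φ w₀) := by
  have hmem : (∑ m ∈ Finset.range (n + 1), conj (c m) •
      fun F => iteratedDeriv m (fun u => F (φ u) * deriv φ u) w₀) ∈ jetFunctionals t (φ w₀) n :=
    Submodule.sum_mem _ fun m hm => Submodule.smul_mem _ _ <|
      jetFunctionals_mono (Nat.lt_succ_iff.mp (Finset.mem_range.mp hm))
        (iteratedDeriv_comp_mul_mem_jetFunctionals hs ht hφ hst hw₀ m _ (hφ.deriv hs))
  obtain ⟨a, ha⟩ := hmem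
  refine ⟨fun p => conj (a p), fun z hz => ?_⟩
  have hpull : ∀ m, antibarDeriv m (fun u => K z (φ u) * conj (deriv φ u)) w₀ =
      conj (iteratedDeriv m (fun u => K (φ u) z * deriv φ u) w₀) := fun m =>
    antibarDeriv_eq_conj_iteratedDeriv (eventually_of_mem (hs.mem_nhds hw₀) fun u hu => by
      rw [map_mul, conj_conj, hK.conj_apply hz (hst hu)])
  have hkernel : ∀ p, antibarDeriv p (fun u => K z u) (φ w₀) =
      conj (iteratedDeriv p (fun ζ => K ζ z) (φ w₀)) := fun p =>
    antibarDeriv_eq_conj_iteratedDeriv (eventually_of_mem (ht.mem_nhds (hst hw₀)) fun ζ hζ =>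
      hK.conj_apply hz hζ)
  have hjet := congrArg conj (ha _ (hK.1 z hz).1)
  simp only [Finset.sum_apply, Pi.smul_apply, smul_eq_mul, map_sum, map_mul, conj_conj] at hjet
  simp only [hpull, hkernel, hjet]

end Quadrature

theorem inverse_map_derivative_is_kernel_combination_general
    (Ω₁ Ω₂ : Set ℂ) (hΩ₁ : IsOpen Ω₁) (hΩ₂ : IsOpen Ω₂)
    (φ Φ : ℂ → ℂ)
    (hφ : DifferentiableOn ℂ φ Ω₁) (hΦ : DifferentiableOn ℂ Φ Ω₂)
    (himg : φ '' Ω₁ = Ω₂)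
    (hinv₁ : ∀ z ∈ Ω₁, Φ (φ z) = z) (hinv₂ : ∀ z ∈ Ω₂, φ (Φ z) = z)
    (K₁ K₂ : ℂ → ℂ → ℂ)
    (hK₁ : IsBergmanKernel Ω₁ K₁) (hK₂ : IsBergmanKernel Ω₂ K₂)
    (N : ℕ) (n : Fin N → ℕ) (w : Fin N → ℂ) (hw : ∀ j, w j ∈ Ω₁)
    (c : Fin N → ℕ → ℂ)
    -- the quadrature-domain identity `1 ≡ Σ c_{jm} K₁^{(m)}(z, w_j)` on `Ω₁`
    (hquad : ∀ z ∈ Ω₁, (1 : ℂ) =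
      ∑ j, ∑ m ∈ Finset.range (n j + 1),
        c j m * antibarDeriv m (fun u => K₁ z u) (w j)) :
    (∀ z ∈ Ω₂, deriv Φ z =
      ∑ j, ∑ m ∈ Finset.range (n j + 1),
        c j m * antibarDeriv m (fun u => K₂ z (φ u) * starRingEnd ℂ (deriv φ u)) (w j)) ∧
    ∃ (M : ℕ) (W : Fin M → ℂ) (_ : ∀ k, W k ∈ Ω₂) (p : Fin M → ℕ) (d : Fin M → ℕ → ℂ),
      ∀ z ∈ Ω₂, deriv Φ z =
        ∑ k, ∑ m ∈ Finset.range (p k + 1),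
          d k m * antibarDeriv m (fun u => K₂ z u) (W k) := by
  have hφst : MapsTo φ Ω₁ Ω₂ := himg ▸ mapsTo_image φ Ω₁
  have hinv : InvOn Φ φ Ω₁ Ω₂ := ⟨hinv₁, hinv₂⟩
  have hΦts : MapsTo Φ Ω₂ Ω₁ := mapsTo_iff_image_subset.mpr (by rw [← himg, hinv.1.image_image])
  have hderiv : ∀ z ∈ Ω₂, _ := fun z hz => deriv_eq_sum_antibarDeriv_of_quadrature hΩ₁ hΩ₂ hφ hΦ
    hφst hΦts hinv hK₁ hK₂ hw hquad hz
  choose d hd using fun j =>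
    hK₂.exists_sum_antibarDeriv_pullback_eq hΩ₁ hΩ₂ hφ hφst (hw j) (n j) (c j)
  refine ⟨hderiv, N, fun j => φ (w j), fun j => hφst (hw j), n, d, fun z hz => ?_⟩
  rw [hderiv z hz]
  exact Finset.sum_congr rfl fun j _ => hd j z hz

/-- If `Ω₁` is a quadrature domain of finite area (so that
`1 ≡ Σ c_{jm} K₁^{(m)}(z, w_j)` on `Ω₁`) and `φ : Ω₁ → Ω₂` is a biholomorphism
with inverse `Φ`, then `Φ'(z) = Σ c_{jm} (∂^m/∂w̄^m)[K₂(z, φ(w)) conj(φ'(w))]|_{w=w_j}`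
on `Ω₂`; in particular `Φ'` is a finite linear combination of the functions
`z ↦ (∂^m/∂W̄^m) K₂(z, W)` at points `W ∈ Ω₂`. -/
theorem inverse_map_derivative_is_kernel_combination
    (Ω₁ Ω₂ : Set ℂ) (hΩ₁ : IsOpen Ω₁) (hΩ₂ : IsOpen Ω₂)
    (hconn₁ : IsConnected Ω₁) (hconn₂ : IsConnected Ω₂)
    (hfin : volume Ω₁ < ⊤)
    (φ Φ : ℂ → ℂ)
    (hφ : DifferentiableOn ℂ φ Ω₁) (hΦ : DifferentiableOn ℂ Φ Ω₂)
    (himg : φ '' Ω₁ = Ω₂)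
    (hinv₁ : ∀ z ∈ Ω₁, Φ (φ z) = z) (hinv₂ : ∀ z ∈ Ω₂, φ (Φ z) = z)
    (K₁ K₂ : ℂ → ℂ → ℂ)
    (hK₁ : IsBergmanKernel Ω₁ K₁) (hK₂ : IsBergmanKernel Ω₂ K₂)
    (N : ℕ) (n : Fin N → ℕ) (w : Fin N → ℂ) (hw : ∀ j, w j ∈ Ω₁)
    (c : Fin N → ℕ → ℂ)
    -- the quadrature-domain identity `1 ≡ Σ c_{jm} K₁^{(m)}(z, w_j)` on `Ω₁`
    (hquad : ∀ z ∈ Ω₁, (1 : ℂ) =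
      ∑ j, ∑ m ∈ Finset.range (n j + 1),
        c j m * antibarDeriv m (fun u => K₁ z u) (w j)) :
    (∀ z ∈ Ω₂, deriv Φ z =
      ∑ j, ∑ m ∈ Finset.range (n j + 1),
        c j m * antibarDeriv m (fun u => K₂ z (φ u) * starRingEnd ℂ (deriv φ u)) (w j)) ∧
    ∃ (M : ℕ) (W : Fin M → ℂ) (_ : ∀ k, W k ∈ Ω₂) (p : Fin M → ℕ) (d : Fin M → ℕ → ℂ),
      ∀ z ∈ Ω₂, deriv Φ z =
        ∑ k, ∑ m ∈ Finset.range (p k + 1),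
          d k m * antibarDeriv m (fun u => K₂ z u) (W k) :=
  inverse_map_derivative_is_kernel_combination_general Ω₁ Ω₂ hΩ₁ hΩ₂ φ Φ hφ hΦ himg hinv₁ hinv₂ K₁
    K₂ hK₁ hK₂ N n w hw c hquad
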